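/- arXiv:math/0401240 — 3 statements merged into one kernel-verified Lean document; each statement's English description precedes it below -/
import Mathlib

section
/- Let $A$ be a unital C*-algebra, $p \in A$ a projection, and $a \in A$ with $\|a\| \le 1$. If $\|a^*a - p\| < 1/16$ and $\|aa^* - p\| < 1/16$, then, setting $b = pap$, there exists a partial isometry $v \in A$ with $v^*v = p = vv^*$ and $\|v - b\| < 2/7$. -/
/-!
Write `q = 1 - p` and `b = pap`. The C*-identity gives `‖qa‖² = ‖q(aa* - p)q‖ < 1/16`, and
`b*b - p = p(a*a - p)p - p(qa)*(qa)p`, so `‖b*b - p‖ < 1/8`; likewise `‖bb* - p‖ < 1/8`.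
Hence `c = b*b + q` is within `1/8` of `1`, its spectrum lies in `[7/8, 9/8]`, and
`d = c^(-1/2)` satisfies `dcd = 1` and `‖d - 1‖ ≤ 1/7`. As `d` commutes with `p` and `cq = q`,
`v = bd` satisfies `v*v = d(c - q)d = p`. Since `bb* + q` is invertible too, `b`, and with it `v`,
has a right inverse in `pAp`, and an isometry of `pAp` with a right inverse is unitary.
Finally `‖v - b‖ ≤ ‖b‖‖d - 1‖ ≤ 1/7`.
-/

section StarRing

variable {R : Type*} [Ring R] [StarRing R] {p b d : R}

lemma star_mul_self_eq_of_mul_mul_eq_one (hp : IsIdempotentElem p) (hbp : b * p = b)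
    (hd : IsSelfAdjoint d) (hdp : Commute d p) (hdc : Commute d (star b * b + (1 - p)))
    (hdcd : d * (star b * b + (1 - p)) * d = 1) :
    star (b * d) * (b * d) = p := by
  set c := star b * b + (1 - p) with hc
  have hdq : Commute d (1 - p) := (Commute.one_right d).sub_right hdp
  have hcq : c * (1 - p) = 1 - p := by
    rw [add_mul, hp.one_sub.eq, mul_assoc, mul_one_sub, hbp, sub_self, mul_zero, zero_add]
  have hdqd : d * (1 - p) * d = 1 - p :=
    calc d * (1 - p) * d = d * d * (c * (1 - p)) := by
          rw [hcq, mul_assoc, ← hdq.eq, mul_assoc]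
      _ = d * c * d * (1 - p) := by
          rw [show d * c * d = d * d * c by rw [mul_assoc, ← hdc.eq, ← mul_assoc],
            mul_assoc (d * d)]
      _ = 1 - p := by rw [hdcd, one_mul]
  calc star (b * d) * (b * d) = d * c * d - d * (1 - p) * d := by
        rw [star_mul, hd.star_eq, hc]; noncomm_ring
    _ = p := by rw [hdcd, hdqd, sub_sub_cancel]

lemma mul_star_self_eq_of_star_mul_self_eq {v : R} (hp : IsSelfAdjoint p)
    (hvv : star v * v = p) (hpv : p * v = v) (hvp : v * p = v) (hv : ∃ y, v * y = p) :
    v * star v = p := by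
  obtain ⟨y, hy⟩ := hv
  calc v * star v = v * star v * p := by rw [mul_assoc, ← hp.star_eq, ← star_mul, hpv]
    _ = v * (star v * v) * y := by rw [← hy]; noncomm_ring
    _ = p := by rw [hvv, hvp, hy]

end StarRing

section Corner

variable {A : Type*} [CStarAlgebra A] {p : A}

lemma IsStarProjection.norm_mul_mul_le (hp : IsStarProjection p) (x : A) :
    ‖p * x * p‖ ≤ ‖x‖ :=
  calc ‖p * x * p‖ ≤ ‖p‖ * ‖x‖ * ‖p‖ := norm_mul₃_le
    _ ≤ 1 * ‖x‖ * 1 := by gcongr <;> exact IsStarProjection.norm_le p hp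
    _ = ‖x‖ := by ring

lemma IsStarProjection.norm_one_sub_mul_sq_le (hp : IsStarProjection p) (x : A) :
    ‖(1 - p) * x‖ ^ 2 ≤ ‖x * star x - p‖ := by
  have hq := hp.one_sub
  have hid : (1 - p) * (x * star x - p) * (1 - p)
      = (1 - p) * x * star ((1 - p) * x) - (1 - p) * p * (1 - p) := by
    rw [star_mul, hq.isSelfAdjoint.star_eq]; noncomm_ring
  calc ‖(1 - p) * x‖ ^ 2 = ‖(1 - p) * (x * star x - p) * (1 - p)‖ := by
        rw [hid, hp.one_sub_mul_self, zero_mul, sub_zero, sq, CStarRing.norm_self_mul_star]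
    _ ≤ ‖x * star x - p‖ := hq.norm_mul_mul_le _

lemma IsStarProjection.norm_star_mul_self_corner_sub_le (hp : IsStarProjection p) (a : A) :
    ‖star (p * a * p) * (p * a * p) - p‖ ≤ ‖star a * a - p‖ + ‖a * star a - p‖ := by
  have hid : star (p * a * p) * (p * a * p) - p
      = p * ((star a * a - p) - star ((1 - p) * a) * ((1 - p) * a)) * p := by
    have hpp : ∀ x, p * (p * x) = p * x := fun x => by rw [← mul_assoc, hp.isIdempotentElem.eq]
    simp only [star_mul, star_sub, hp.isSelfAdjoint.star_eq, mul_sub, sub_mul,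
      one_mul, mul_assoc, hpp, hp.isIdempotentElem.eq]
    abel
  calc ‖star (p * a * p) * (p * a * p) - p‖
      ≤ ‖(star a * a - p) - star ((1 - p) * a) * ((1 - p) * a)‖ :=
        hid ▸ hp.norm_mul_mul_le _
    _ ≤ ‖star a * a - p‖ + ‖(1 - p) * a‖ ^ 2 := by
        rw [sq, ← CStarRing.norm_star_mul_self]; exact norm_sub_le _ _
    _ ≤ ‖star a * a - p‖ + ‖a * star a - p‖ := by
        gcongr; exact hp.norm_one_sub_mul_sq_le a

lemma exists_mul_eq_of_norm_mul_star_sub_lt_one (hp : IsIdempotentElem p) {b : A}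
    (hpb : p * b = b) (hb : ‖b * star b - p‖ < 1) : ∃ y, b * y = p := by
  obtain ⟨u, hu⟩ : IsUnit (b * star b + (1 - p)) := by
    rw [show b * star b + (1 - p) = 1 - (p - b * star b) by abel]
    exact isUnit_one_sub_of_norm_lt_one (by rwa [norm_sub_rev])
  refine ⟨star b * ↑u⁻¹, ?_⟩
  have hpu : p * (b * star b + (1 - p)) = b * star b := by
    rw [mul_add, hp.mul_one_sub_self, add_zero, ← mul_assoc, hpb]
  rw [← mul_assoc, ← hpu, ← hu, mul_assoc, u.mul_inv, mul_one]

end Corner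

section InvSqrt

variable {A : Type*} [CStarAlgebra A] {c : A} {ε : ℝ}

lemma abs_sub_one_le_of_mem_spectrum {t : ℝ} (ht : t ∈ spectrum ℝ c) :
    |t - 1| ≤ ‖c - 1‖ := by
  obtain _ | _ := subsingleton_or_nontrivial A
  · simp [spectrum.of_subsingleton] at ht
  have : t - 1 ∈ spectrum ℝ (c - algebraMap ℝ A 1) := by
    rw [← spectrum.sub_singleton_eq]
    exact Set.sub_mem_sub ht rfl
  simpa using spectrum.norm_le_norm_of_mem this

lemma pos_of_mem_spectrum_of_norm_sub_one_lt_one (h : ‖c - 1‖ < 1) {t : ℝ}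
    (ht : t ∈ spectrum ℝ c) : 0 < t := by
  linarith [neg_abs_le (t - 1), abs_sub_one_le_of_mem_spectrum ht]

lemma continuousOn_inv_sqrt_spectrum (h : ‖c - 1‖ < 1) :
    ContinuousOn (fun t : ℝ => (√t)⁻¹) (spectrum ℝ c) :=
  Real.continuous_sqrt.continuousOn.inv₀ fun _ ht =>
    (Real.sqrt_pos.2 (pos_of_mem_spectrum_of_norm_sub_one_lt_one h ht)).ne'

-- `|1 - √t| ≤ |1 - t| ≤ ε` and `√t ≥ min t 1 ≥ 1 - ε`.
lemma abs_inv_sqrt_sub_one_le {t : ℝ} (hε : ε < 1) (ht : |t - 1| ≤ ε) :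
    |(√t)⁻¹ - 1| ≤ ε / (1 - ε) := by
  obtain ⟨ht₁, ht₂⟩ := abs_le.mp ht
  have hs := Real.sq_sqrt (show 0 ≤ t by linarith)
  have hs₀ := Real.sqrt_nonneg t
  have hs₁ : 1 - ε ≤ √t := by nlinarith
  have hs₂ : |1 - √t| ≤ ε := by
    rw [abs_le]; constructor <;> nlinarith
  have hs₃ : 0 < √t := by linarith
  rw [show (√t)⁻¹ - 1 = (1 - √t) / √t by field_simp, abs_div, abs_of_pos hs₃]
  exact div_le_div₀ (by linarith [abs_nonneg (1 - √t)]) hs₂ (by linarith) hs₁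

namespace CFC

variable (c) in
noncomputable def invSqrt : A := cfc (fun t : ℝ => (√t)⁻¹) c

lemma isSelfAdjoint_invSqrt : IsSelfAdjoint (invSqrt c) := IsSelfAdjoint.cfc

lemma _root_.Commute.invSqrt_left {x : A} (h : Commute c x) : Commute (invSqrt c) x :=
  h.cfc_real _

lemma invSqrt_mul_mul_invSqrt (hc : IsSelfAdjoint c) (h : ‖c - 1‖ < 1) :
    invSqrt c * c * invSqrt c = 1 := by
  have hcont := continuousOn_inv_sqrt_spectrum h
  calc invSqrt c * c * invSqrt c = cfc (fun t : ℝ => (√t)⁻¹ * t * (√t)⁻¹) c := by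
        rw [cfc_mul (fun t : ℝ => (√t)⁻¹ * t) (fun t => (√t)⁻¹) c,
          cfc_mul (fun t : ℝ => (√t)⁻¹) (fun t => t) c, cfc_id' ℝ c, invSqrt]
    _ = cfc (fun _ : ℝ => (1 : ℝ)) c := cfc_congr fun t ht => by
        have ht₀ := pos_of_mem_spectrum_of_norm_sub_one_lt_one h ht
        have := Real.mul_self_sqrt ht₀.le
        have := Real.sqrt_pos.2 ht₀
        field_simp
        linarith
    _ = 1 := cfc_const_one ℝ c

lemma norm_invSqrt_sub_one_le (hc : IsSelfAdjoint c) (hε : ε < 1) (h : ‖c - 1‖ ≤ ε) :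
    ‖invSqrt c - 1‖ ≤ ε / (1 - ε) := by
  have hcont := continuousOn_inv_sqrt_spectrum (h.trans_lt hε)
  rw [invSqrt, ← cfc_const_one ℝ c, ← cfc_sub (fun t : ℝ => (√t)⁻¹) (fun _ => 1) c]
  exact norm_cfc_le (div_nonneg ((norm_nonneg _).trans h) (by linarith)) fun t ht =>
    abs_inv_sqrt_sub_one_le hε ((abs_sub_one_le_of_mem_spectrum ht).trans h)

end CFC

end InvSqrt

open CFC in
theorem IsStarProjection.exists_near_corner_unitary {A : Type*} [CStarAlgebra A] {p b : A}
    {ε : ℝ} (hp : IsStarProjection p) (hpb : p * b = b) (hbp : b * p = b) (hε : ε < 1)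
    (h₁ : ‖star b * b - p‖ ≤ ε) (h₂ : ‖b * star b - p‖ < 1) :
    ∃ v : A, star v * v = p ∧ v * star v = p ∧ ‖v - b‖ ≤ ‖b‖ * (ε / (1 - ε)) := by
  set c := star b * b + (1 - p) with hc
  have hc₁ : ‖c - 1‖ ≤ ε := by rwa [show c - 1 = star b * b - p by rw [hc]; abel]
  have hcsa : IsSelfAdjoint c := (IsSelfAdjoint.star_mul_self b).add hp.one_sub.isSelfAdjoint
  have hcp : Commute c p := by
    have hpbs : p * star b = star b := by rw [← hp.isSelfAdjoint.star_eq, ← star_mul, hbp]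
    rw [Commute, SemiconjBy, add_mul, mul_add, hp.one_sub_mul_self, hp.mul_one_sub_self,
      mul_assoc, hbp, ← mul_assoc, hpbs]
  have hdcd : invSqrt c * c * invSqrt c = 1 := invSqrt_mul_mul_invSqrt hcsa (hc₁.trans_lt hε)
  have hvv : star (b * invSqrt c) * (b * invSqrt c) = p :=
    star_mul_self_eq_of_mul_mul_eq_one hp.isIdempotentElem hbp isSelfAdjoint_invSqrt
      hcp.invSqrt_left (Commute.refl c).invSqrt_left hdcd
  refine ⟨b * invSqrt c, hvv, ?_, ?_⟩
  · obtain ⟨y, hy⟩ := exists_mul_eq_of_norm_mul_star_sub_lt_one hp.isIdempotentElem hpb h₂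
    -- `b = v * (c * d)` since `dcd = 1`, so a right inverse of `b` yields one of `v`.
    refine mul_star_self_eq_of_star_mul_self_eq hp.isSelfAdjoint hvv (by rw [← mul_assoc, hpb])
      (by rw [mul_assoc, hcp.invSqrt_left.eq, ← mul_assoc, hbp]) ⟨c * invSqrt c * y, ?_⟩
    rw [← hy, show b * invSqrt c * (c * invSqrt c * y) = b * (invSqrt c * c * invSqrt c) * y by
      noncomm_ring, hdcd, mul_one]
  · calc ‖b * invSqrt c - b‖ = ‖b * (invSqrt c - 1)‖ := by rw [mul_sub, mul_one]
      _ ≤ ‖b‖ * (ε / (1 - ε)) := by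
          grw [norm_mul_le, norm_invSqrt_sub_one_le hcsa hε hc₁]

/-- Section 6.1: if `a` is almost an isometry implementing a projection `p`,
then there is a unitary of the corner `pAp` (a partial isometry `v` with
`v*v = p = vv*`) within `2/7` of `b = pap`. -/
theorem stmt_1 {A : Type*} [CStarAlgebra A] (p a : A)
    (hp : IsIdempotentElem p) (hpsa : IsSelfAdjoint p)
    (ha : ‖a‖ ≤ 1)
    (h1 : ‖star a * a - p‖ < 1 / 16) (h2 : ‖a * star a - p‖ < 1 / 16) :
    ∃ v : A, star v * v = p ∧ v * star v = p ∧ ‖v - p * a * p‖ < 2 / 7 := by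
  have hP : IsStarProjection p := ⟨hp, hpsa⟩
  have hb : ‖p * a * p‖ ≤ 1 := (hP.norm_mul_mul_le a).trans ha
  have hbb : ‖star (p * a * p) * (p * a * p) - p‖ ≤ 1 / 8 := by
    linarith [hP.norm_star_mul_self_corner_sub_le a]
  have hbb' : ‖p * a * p * star (p * a * p) - p‖ < 1 := by
    have hstar : p * star a * p = star (p * a * p) := by
      simp only [star_mul, hpsa.star_eq, mul_assoc]
    have := hP.norm_star_mul_self_corner_sub_le (star a)
    rw [hstar, star_star, star_star] at this
    linarith
  obtain ⟨v, hvv, hvv', hv⟩ := hP.exists_near_corner_unitary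
    (by rw [← mul_assoc, ← mul_assoc, hp.eq]) (by rw [mul_assoc, hp.eq]) (by norm_num) hbb hbb'
  refine ⟨v, hvv, hvv', hv.trans_lt ?_⟩
  nlinarith [norm_nonneg (p * a * p)]
end

section
/- Let $A$ be a unital C*-algebra. Then the group $U_0(A)/CU(A)$ is divisible, where $U_0(A)$ is the connected component of the identity in the unitary group $U(A)$ and $CU(A)$ is the closure of the commutator subgroup of $U(A)$. -/
/-!
Since the unitary group is locally path connected, its identity component consists of the finite
products `∏ exp (i aⱼ)` with `aⱼ` self-adjoint. The quotient `U(A)/CU(A)` is abelian, so the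
image of `∏ exp (i aⱼ / k)` is a `k`-th root of the image of `∏ exp (i aⱼ)`.
-/

instance unitary.instTopologicalGroup' {A : Type*} [CStarAlgebra A] :
    IsTopologicalGroup (unitary A) where
  continuous_mul := by
    apply continuous_induced_rng.2
    exact (continuous_subtype_val.comp continuous_fst).mul
      (continuous_subtype_val.comp continuous_snd)
  continuous_inv := by
    apply continuous_induced_rng.2
    exact continuous_star.comp continuous_subtype_val

/-- `CU(A)`, the closure of the commutator subgroup of `U(A)`. -/
def CU (A : Type*) [CStarAlgebra A] : Subgroup (unitary A) :=
  (commutator (unitary A)).topologicalClosure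

/-- `U₀(A)`, the connected component of the identity in the unitary group. -/
def U₀ (A : Type*) [CStarAlgebra A] : Subgroup (unitary A) :=
  Subgroup.connectedComponentOfOne (unitary A)

open selfAdjoint

open scoped IsMulCommutative in
theorem QuotientGroup.mk_list_prod_pow {G : Type*} [Group G] (N : Subgroup G) [N.Normal]
    [IsMulCommutative (G ⧸ N)] (l : List G) (k : ℕ) :
    ((l.prod ^ k : G) : G ⧸ N) = ((l.map (· ^ k)).prod : G) := by
  simp only [← QuotientGroup.mk'_apply, map_pow, map_list_prod, List.map_map]
  rw [← powMonoidHom_apply, map_list_prod, List.map_map]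
  rfl

section CStarAlgebra

variable {A : Type*} [CStarAlgebra A]

theorem selfAdjoint.expUnitary_nsmul (n : ℕ) (a : selfAdjoint A) :
    expUnitary (n • a) = expUnitary a ^ n := by
  induction n with
  | zero => simp
  | succ n ih =>
    have hcomm : Commute ((n • a : selfAdjoint A) : A) a := by
      rw [AddSubgroup.coe_nsmul]
      exact (Commute.refl (a : A)).smul_left n
    rw [succ_nsmul, hcomm.expUnitary_add, ih, pow_succ]

theorem selfAdjoint.expUnitary_inv_natCast_smul_pow {k : ℕ} (hk : k ≠ 0) (a : selfAdjoint A) :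
    expUnitary ((k : ℝ)⁻¹ • a) ^ k = expUnitary a := by
  rw [← expUnitary_nsmul, ← Nat.cast_smul_eq_nsmul ℝ, smul_smul,
    mul_inv_cancel₀ (Nat.cast_ne_zero.mpr hk), one_smul]

theorem mem_U₀_iff {u : unitary A} :
    u ∈ U₀ A ↔ ∃ l : List (selfAdjoint A), (l.map expUnitary).prod = u := by
  rw [← Unitary.mem_pathComponentOne_iff, pathComponent_eq_connectedComponent]
  rfl

instance CU.normal : (CU A).Normal :=
  Subgroup.is_normal_topologicalClosure _

instance CU.isMulCommutative_quotient : IsMulCommutative (unitary A ⧸ CU A) :=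
  Subgroup.Normal.quotient_commutative_iff_commutator_le.mpr
    (commutator (unitary A)).le_topologicalClosure

end CStarAlgebra

/-- Lemma 6.6 (1): `U₀(A)/CU(A)` is divisible: for every `u ∈ U₀(A)` and every
`k > 0` there is `v ∈ U₀(A)` with `v̄ᵏ = ū` in `U(A)/CU(A)`. -/
theorem stmt_4 (A : Type*) [CStarAlgebra A] :
    ∀ u ∈ U₀ A, ∀ k : ℕ, 0 < k → ∃ v ∈ U₀ A,
      (QuotientGroup.mk (v ^ k) : unitary A ⧸ (CU A)) = QuotientGroup.mk u := by
  rintro u hu k hk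
  obtain ⟨l, rfl⟩ := mem_U₀_iff.mp hu
  refine ⟨((l.map ((k : ℝ)⁻¹ • ·)).map expUnitary).prod,
    mem_U₀_iff.mpr ⟨_, rfl⟩, ?_⟩
  simp only [QuotientGroup.mk_list_prod_pow, List.map_map, Function.comp_def,
    expUnitary_inv_natCast_smul_pow hk.ne']
end

section
/- Let $A$ be a separable unital C*-algebra, $\varepsilon > 0$, and ${\cal F} \subset A$ a finite subset. Then there exist $\delta > 0$ and a finite subset ${\cal G} \subset A$ such that: for any unital separable C*-algebra $C$ possessing at least one tracial state, any unital completely positive contraction $L : A \to C$ satisfying $\|L(ab) - L(a)L(b)\| < \delta$ for all $a, b \in {\cal G}$, and any tracial state $t \in T(C)$, there is a tracial state $\tau \in T(A)$ with $|\tau(a) - t(L(a))| < \varepsilon$ for all $a \in {\cal F}$. -/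
open ComplexOrder Matrix

/-- A tracial state on a unital C*-algebra: a positive unital linear functional
which is tracial. -/
def IsTracialState {A : Type*} [CStarAlgebra A] (φ : A →L[ℂ] ℂ) : Prop :=
  φ 1 = 1 ∧ (∀ a : A, 0 ≤ φ (star a * a)) ∧ ∀ a b : A, φ (a * b) = φ (b * a)

/-- A unital completely positive map between unital C*-algebras: positivity of all
matrix amplifications. -/
def IsUCP {A C : Type*} [CStarAlgebra A] [CStarAlgebra C] (L : A →L[ℂ] C) : Prop :=
  L 1 = 1 ∧ ‖L‖ ≤ 1 ∧
    ∀ (n : ℕ) (x : Matrix (Fin n) (Fin n) A), (∃ y, x = yᴴ * y) →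
      ∃ z : Matrix (Fin n) (Fin n) C, x.map ⇑L = zᴴ * z

lemma aux_bound {B : Type*} [CStarAlgebra B] (φ : B →L[ℂ] ℂ) (h1 : φ 1 = 1)
    (hpos : ∀ b : B, 0 ≤ φ (star b * b)) : ∀ b : B, ‖φ b‖ ≤ 2 * ‖b‖ := by
  letI := CStarAlgebra.spectralOrder B
  letI := CStarAlgebra.spectralOrderedRing B
  have hmono : ∀ x : B, 0 ≤ x → 0 ≤ φ x := by
    intro x hx
    rw [StarOrderedRing.nonneg_iff] at hx
    induction hx using AddSubmonoid.closure_induction with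
    | mem y hy => obtain ⟨s, rfl⟩ := hy; exact hpos s
    | zero => simp
    | add y z _ _ hy hz => rw [map_add]; exact add_nonneg hy hz
  have hφr : ∀ r : ℝ, φ (algebraMap ℝ B r) = (r : ℂ) := by
    intro r
    rw [IsScalarTower.algebraMap_apply ℝ ℂ B, Algebra.algebraMap_eq_smul_one, _root_.map_smul, h1,
      smul_eq_mul, mul_one, Complex.coe_algebraMap]
  have hsa : ∀ h : B, IsSelfAdjoint h → ‖φ h‖ ≤ ‖h‖ := by
    intro h hh
    have h1' := hmono _ (sub_nonneg.mpr hh.le_algebraMap_norm_self)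
    have h2' := hmono _ (sub_nonneg.mpr hh.neg_algebraMap_norm_le_self)
    rw [map_sub, hφr] at h1'
    rw [map_sub, map_neg, hφr] at h2'
    rw [Complex.le_def] at h1' h2'
    simp only [Complex.sub_re, Complex.sub_im, Complex.ofReal_re, Complex.ofReal_im,
      Complex.zero_re, Complex.zero_im, Complex.neg_re, Complex.neg_im] at h1' h2'
    have him : (φ h).im = 0 := by linarith [h1'.2]
    have hre : |(φ h).re| ≤ ‖h‖ := by
      rw [abs_le]; constructor <;> linarith [h1'.1, h2'.1]
    have : φ h = ((φ h).re : ℂ) := Complex.ext rfl (by simp [him])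
    rw [this, Complex.norm_real]
    exact hre
  intro b
  obtain ⟨h, k, hsh, hsk, hb, hnh, hnk⟩ : ∃ h k : B, _root_.IsSelfAdjoint h ∧ _root_.IsSelfAdjoint k ∧
      b = h + Complex.I • k ∧ ‖h‖ ≤ ‖b‖ ∧ ‖k‖ ≤ ‖b‖ := by
    refine ⟨((1 : ℂ)/2) • (b + star b), (Complex.I/2) • (star b - b), ?_, ?_, ?_, ?_, ?_⟩
    · rw [_root_.IsSelfAdjoint, star_smul, star_add, star_star]
      have : star ((1:ℂ)/2) = (1:ℂ)/2 := by simp [Complex.ext_iff]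
      rw [this, add_comm]
    · rw [_root_.IsSelfAdjoint, star_smul, star_sub, star_star]
      have : star (Complex.I/2) = -(Complex.I/2) := by
        simp [Complex.star_def, map_div₀, Complex.conj_I, neg_div]
      rw [this, neg_smul, ← smul_neg, neg_sub]
    · rw [smul_smul]
      have : Complex.I * (Complex.I / 2) = -(1/2) := by
        rw [mul_div_assoc', Complex.I_mul_I]; ring
      rw [this]
      module
    · rw [norm_smul]
      calc ‖(1:ℂ)/2‖ * ‖b + star b‖ ≤ (1/2) * (‖b‖ + ‖star b‖) := by
            rw [norm_div, norm_one]; simp only [Complex.norm_ofNat]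
            gcongr; exact norm_add_le _ _
        _ = ‖b‖ := by rw [norm_star]; ring
    · rw [norm_smul]
      calc ‖Complex.I/2‖ * ‖star b - b‖ ≤ (1/2) * (‖star b‖ + ‖b‖) := by
            rw [norm_div, Complex.norm_I]; simp only [Complex.norm_ofNat]
            gcongr; exact norm_sub_le _ _
        _ = ‖b‖ := by rw [norm_star]; ring
  have hφb : φ b = φ h + Complex.I * φ k := by rw [hb, map_add, _root_.map_smul, smul_eq_mul]
  calc ‖φ b‖ = ‖φ h + Complex.I * φ k‖ := by rw [hφb]
    _ ≤ ‖φ h‖ + ‖Complex.I * φ k‖ := norm_add_le _ _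
    _ ≤ ‖h‖ + 1 * ‖k‖ := by
        rw [norm_mul, Complex.norm_I]
        exact add_le_add (hsa h hsh) (by rw [one_mul, one_mul]; exact hsa k hsk)
    _ ≤ 2 * ‖b‖ := by rw [one_mul]; linarith

lemma aux_L_pos {A C : Type*} [CStarAlgebra A] [CStarAlgebra C] (L : A →L[ℂ] C)
    (hL : IsUCP L) (a : A) : ∃ c : C, L (star a * a) = star c * c := by
  obtain ⟨-, -, h⟩ := hL
  obtain ⟨z, hz⟩ := h 1 (Matrix.of fun _ _ => star a * a) ⟨Matrix.of fun _ _ => a, by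
    ext i j
    simp [Matrix.mul_apply, Matrix.conjTranspose_apply, Fin.sum_univ_one]⟩
  refine ⟨z 0 0, ?_⟩
  have := congrFun (congrFun hz 0) 0
  simpa [Matrix.mul_apply, Matrix.conjTranspose_apply, Fin.sum_univ_one, Matrix.map_apply] using this


/-- Lemma 9.4: approximate multiplicative domain of traces. Given `ε > 0` and a finite
set `F ⊆ A`, there are `δ > 0` and a finite set `G ⊆ A` such that for every unital
separable C*-algebra `C` with a tracial state, every unital completely positive
contraction `L : A → C` which is `G`-`δ`-multiplicative, and every tracial state `t`
on `C`, some tracial state `τ` of `A` satisfies `|τ(a) - t(L(a))| < ε` on `F`. -/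
theorem stmt_7 {A : Type*} [CStarAlgebra A] [TopologicalSpace.SeparableSpace A]
    (ε : ℝ) (hε : 0 < ε) (F : Finset A) :
    ∃ δ > (0 : ℝ), ∃ G : Finset A,
      ∀ (C : Type) (_ : CStarAlgebra C) (_ : TopologicalSpace.SeparableSpace C),
        (∃ t₀ : C →L[ℂ] ℂ, IsTracialState t₀) →
        ∀ L : A →L[ℂ] C, IsUCP L →
          (∀ a ∈ G, ∀ b ∈ G, ‖L (a * b) - L a * L b‖ < δ) →
          ∀ t : C →L[ℂ] ℂ, IsTracialState t →
            ∃ τ : A →L[ℂ] ℂ, IsTracialState τ ∧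
              ∀ a ∈ F, ‖τ a - t (L a)‖ < ε := by
  classical
  by_contra hcon
  push_neg at hcon
  have : Nonempty A := ⟨1⟩
  set u : ℕ → A := TopologicalSpace.denseSeq A with hu_def
  have hu : DenseRange u := TopologicalSpace.denseRange_denseSeq A
  have key := fun n : ℕ => hcon (1/((n:ℝ)+1)) (by positivity) ((Finset.range n).image u)
  choose Cn i1 i2 ht0 Ln hUCP hmul tn htn hbad using key
  have hΦex : ∀ n : ℕ, ∃ φ : A →L[ℂ] ℂ,
      (∀ a, φ a = tn n (Ln n a)) ∧ φ 1 = 1 ∧ (∀ a : A, 0 ≤ φ (star a * a)) ∧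
      (∀ a, ‖φ a‖ ≤ 2 * ‖a‖) ∧
      (∀ k l, k < n → l < n → ‖φ (u k * u l) - φ (u l * u k)‖ ≤ 4 / ((n:ℝ)+1)) := by
    intro n
    letI := i1 n
    obtain ⟨t1, tpos, ttr⟩ := htn n
    have tb : ∀ x, ‖tn n x‖ ≤ 2 * ‖x‖ := aux_bound (tn n) t1 tpos
    refine ⟨(tn n).comp (Ln n), fun a => rfl, ?_, ?_, ?_, ?_⟩
    · rw [ContinuousLinearMap.comp_apply, (hUCP n).1, t1]
    · intro a
      obtain ⟨c, hc⟩ := aux_L_pos (Ln n) (hUCP n) a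
      rw [ContinuousLinearMap.comp_apply, hc]
      exact tpos c
    · intro a
      calc ‖tn n (Ln n a)‖ ≤ 2 * ‖Ln n a‖ := tb _
        _ ≤ 2 * ‖a‖ := by
            have h2 := (Ln n).le_opNorm a
            have h1 := (hUCP n).2.1
            nlinarith [norm_nonneg (Ln n a), norm_nonneg a]
    · intro k l hk hl
      have hkG : u k ∈ (Finset.range n).image u :=
        Finset.mem_image_of_mem u (Finset.mem_range.mpr hk)
      have hlG : u l ∈ (Finset.range n).image u :=
        Finset.mem_image_of_mem u (Finset.mem_range.mpr hl)
      have e1 := hmul n (u k) hkG (u l) hlG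
      have e2 := hmul n (u l) hlG (u k) hkG
      set a := u k with ha; set b := u l with hb
      have key2 : tn n (Ln n (a*b)) - tn n (Ln n (b*a))
          = tn n (Ln n (a*b) - Ln n a * Ln n b) - tn n (Ln n (b*a) - Ln n b * Ln n a) := by
        rw [map_sub, map_sub, ttr (Ln n a) (Ln n b)]; ring
      show ‖tn n (Ln n (a*b)) - tn n (Ln n (b*a))‖ ≤ 4 / ((n:ℝ)+1)
      rw [key2]
      calc ‖tn n (Ln n (a*b) - Ln n a * Ln n b) - tn n (Ln n (b*a) - Ln n b * Ln n a)‖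
          ≤ ‖tn n (Ln n (a*b) - Ln n a * Ln n b)‖ + ‖tn n (Ln n (b*a) - Ln n b * Ln n a)‖ :=
            norm_sub_le _ _
        _ ≤ 2 * ‖Ln n (a*b) - Ln n a * Ln n b‖ + 2 * ‖Ln n (b*a) - Ln n b * Ln n a‖ :=
            add_le_add (tb _) (tb _)
        _ ≤ 2 * (1/((n:ℝ)+1)) + 2 * (1/((n:ℝ)+1)) :=
            add_le_add (mul_le_mul_of_nonneg_left e1.le (by norm_num))
              (mul_le_mul_of_nonneg_left e2.le (by norm_num))
        _ = 4 / ((n:ℝ)+1) := by ring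
  choose Φ hΦapp hΦ1 hΦpos hΦnorm hΦtr using hΦex
  -- move to the weak dual and take a cluster point
  set Ψ : ℕ → WeakDual ℂ A := fun n => StrongDual.toWeakDual (Φ n) with hΨ_def
  have hΨapp : ∀ n (x : A), Ψ n x = Φ n x := fun n x => rfl
  have hmemK : ∀ n, Ψ n ∈ WeakDual.toStrongDual ⁻¹' Metric.closedBall 0 2 := by
    intro n
    simp only [Set.mem_preimage, mem_closedBall_zero_iff]
    exact ContinuousLinearMap.opNorm_le_bound _ (by norm_num) (fun a => by
      simpa [hΨapp] using hΦnorm n a)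
  obtain ⟨φ, hφK, hcl⟩ := (WeakDual.isCompact_closedBall (𝕜 := ℂ) (0 : StrongDual ℂ A)
      2).exists_clusterPt (f := Filter.map Ψ Filter.atTop)
      (Filter.le_principal_iff.mpr (Filter.mem_map.mpr (Filter.Eventually.of_forall hmemK)))
  have hcl' : MapClusterPt φ Filter.atTop Ψ := hcl
  have heval : ∀ x : A, MapClusterPt (φ x) Filter.atTop (fun n => Φ n x) := by
    intro x
    exact MapClusterPt.continuousAt_comp (WeakDual.eval_continuous (𝕜 := ℂ) x).continuousAt hcl'
  have huniq : ∀ (d : ℕ → ℂ) (c x : ℂ), MapClusterPt c Filter.atTop d →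
      Filter.Tendsto d Filter.atTop (nhds x) → c = x := by
    intro d c x h h'
    exact eq_of_nhds_neBot (h.clusterPt.mono h')
  -- φ is unital
  have hφ1 : φ (1 : A) = 1 := by
    refine huniq _ _ _ (heval 1) ?_
    simpa [hΦ1] using (tendsto_const_nhds : Filter.Tendsto (fun _ : ℕ => (1:ℂ)) _ _)
  -- φ is positive
  have hφpos : ∀ a : A, 0 ≤ φ (star a * a) := by
    intro a
    have hclosed : IsClosed {z : ℂ | 0 ≤ z} := by
      have : {z : ℂ | 0 ≤ z} = Complex.re ⁻¹' Set.Ici 0 ∩ Complex.im ⁻¹' {0} := by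
        ext z
        simp only [Set.mem_setOf_eq, Set.mem_inter_iff, Set.mem_preimage, Set.mem_Ici,
          Set.mem_singleton_iff, Complex.le_def, Complex.zero_re, Complex.zero_im]
        tauto
      rw [this]
      exact (isClosed_Ici.preimage Complex.continuous_re).inter
        (isClosed_singleton.preimage Complex.continuous_im)
    have hmemcl : φ (star a * a) ∈ closure {z : ℂ | 0 ≤ z} := by
      rw [mem_closure_iff_clusterPt]
      refine ((heval (star a * a)).clusterPt).mono ?_
      rw [Filter.le_principal_iff, Filter.mem_map]
      exact Filter.Eventually.of_forall fun n => hΦpos n a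
    exact hclosed.closure_subset hmemcl
  -- φ is tracial on the dense sequence
  have htrφ : ∀ k l, φ (u k * u l) = φ (u l * u k) := by
    intro k l
    have hconts : Continuous fun ψ : WeakDual ℂ A => ψ (u k * u l) - ψ (u l * u k) :=
      (WeakDual.eval_continuous _).sub (WeakDual.eval_continuous _)
    have hmc : MapClusterPt (φ (u k * u l) - φ (u l * u k)) Filter.atTop
        (fun n => Φ n (u k * u l) - Φ n (u l * u k)) :=
      MapClusterPt.continuousAt_comp hconts.continuousAt hcl'
    have htend : Filter.Tendsto (fun n => Φ n (u k * u l) - Φ n (u l * u k))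
        Filter.atTop (nhds 0) := by
      apply squeeze_zero_norm' (a := fun n : ℕ => 4 / ((n:ℝ)+1))
      · filter_upwards [Filter.eventually_gt_atTop (max k l)] with n hn
        exact hΦtr n k l (lt_of_le_of_lt (le_max_left k l) hn)
          (lt_of_le_of_lt (le_max_right k l) hn)
      · exact Filter.Tendsto.div_atTop tendsto_const_nhds
          (Filter.tendsto_atTop_add_const_right _ 1 tendsto_natCast_atTop_atTop)
    have := huniq _ _ _ hmc htend
    exact sub_eq_zero.mp this
  -- the limit functional, as a bounded functional
  set τ : A →L[ℂ] ℂ := WeakDual.toStrongDual φ with hτ_def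
  have hτapp : ∀ x : A, τ x = φ x := fun x => rfl
  have htr : ∀ a b : A, τ (a * b) = τ (b * a) := by
    have hd : Dense ((Set.range u) ×ˢ (Set.range u)) := Dense.prod hu hu
    have hfc : Continuous fun p : A × A => τ (p.1 * p.2) :=
      τ.continuous.comp (continuous_fst.mul continuous_snd)
    have hgc : Continuous fun p : A × A => τ (p.2 * p.1) :=
      τ.continuous.comp (continuous_snd.mul continuous_fst)
    have heq : Set.EqOn (fun p : A × A => τ (p.1 * p.2)) (fun p : A × A => τ (p.2 * p.1))
        ((Set.range u) ×ˢ (Set.range u)) := by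
      rintro ⟨x, y⟩ ⟨⟨k, rfl⟩, ⟨l, rfl⟩⟩
      exact htrφ k l
    intro a b
    exact congrFun (Continuous.ext_on hd hfc hgc heq) (a, b)
  have hτtracial : IsTracialState τ := ⟨hφ1, hφpos, htr⟩
  -- derive the contradiction
  set U : Set (WeakDual ℂ A) := {ψ | ∀ a ∈ F, ‖ψ a - φ a‖ < ε} with hU_def
  have hUopen : IsOpen U := by
    have hU2 : U = ⋂ a ∈ F, {ψ : WeakDual ℂ A | ‖ψ a - φ a‖ < ε} := by
      ext ψ; simp [hU_def]
    rw [hU2]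
    exact isOpen_biInter_finset fun a _ =>
      isOpen_lt (Continuous.norm ((WeakDual.eval_continuous a).sub continuous_const))
        continuous_const
  have hφU : φ ∈ U := fun a _ => by simp [hε]
  obtain ⟨n, hn⟩ := (mapClusterPt_iff_frequently.mp hcl' U (hUopen.mem_nhds hφU)).exists
  obtain ⟨a, haF, hge⟩ := hbad n τ hτtracial
  have hlt : ‖Ψ n a - φ a‖ < ε := hn a haF
  have heqn : ‖τ a - tn n (Ln n a)‖ = ‖Ψ n a - φ a‖ := by
    rw [hτapp, ← hΦapp n a, ← hΨapp n a, norm_sub_rev]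
  rw [heqn] at hge
  linarith
end
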